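/- There exists an infinite ternary square-free word w : ℕ → Fin 3 in which the letter frequencies exist and are unequal: lim_{n→∞} count_a(w↾n)/n = 11/36, lim_{n→∞} count_b(w↾n)/n = 13/36, and lim_{n→∞} count_c(w↾n)/n = 12/36, where w↾n is the prefix of w of length n. (Such a word is generated by the square-free substitution a → cacbcabacbab, b → cabacbcacbab, c → cbacbcabcbab.) -/

import Mathlib

/-- A word `w` is square-free if whenever `w = x ++ y ++ y ++ z`,
then `y` is the empty word. -/
def SquareFree {α : Type*} (w : List α) : Prop :=
  ∀ x y z : List α, w = x ++ y ++ y ++ z → y = []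

/-- The factor (contiguous subword) of an infinite word `w` of length `n`
starting at position `i`. -/
def factorWord (w : ℕ → Fin 3) (i n : ℕ) : List (Fin 3) :=
  (List.range n).map (fun j => w (i + j))

/-- A finite word `u` is a factor of the infinite word `w`. -/
def IsFactor (w : ℕ → Fin 3) (u : List (Fin 3)) : Prop :=
  ∃ i : ℕ, u = factorWord w i u.length

/-- An infinite ternary word is square-free if every finite factor of it
is square-free. -/
def InfSquareFree (w : ℕ → Fin 3) : Prop :=
  ∀ u : List (Fin 3), IsFactor w u → SquareFree u

/-!
The substitution `a ↦ cacbcabacbab, b ↦ cabacbcacbab, c ↦ cbacbcabcbab` is 12-uniform, and it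
preserves square-freeness by a synchronization argument: in the image of a square-free word the
image of a letter occurs only at multiples of 12, and a letter is determined both by the first 7
and by the last 6 letters of its image. A square in the image of a square-free word `v` is then
either short, hence inside the image of four consecutive letters of `v` (checked by computation),
or its period is a multiple of 12 and it desubstitutes to a square in `v`. So the fixed point
beginning with `c` is square-free. Every image contains four `c`s, and four `a`s and four `b`s
except that the image of `c` has one `a` fewer and one `b` more; hence `c` has frequency `1/3`
and `a`, `b` have frequencies `1/3 ∓ 1/36`.
-/

open List

section Squares

variable {α : Type*}

theorem take_drop_take_drop_of_add_le (l : List α) {a n b c : ℕ} (h : b + c ≤ n) :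
    (((l.drop a).take n).drop b).take c = (l.drop (a + b)).take c := by
  rw [drop_take, take_take, drop_drop, min_eq_left (by omega)]

def HasSquareAt (l : List α) (p m : ℕ) : Prop :=
  0 < m ∧ p + 2 * m ≤ l.length ∧ (l.drop p).take m = (l.drop (p + m)).take m

theorem squareFree_iff_forall_not_hasSquareAt {l : List α} :
    SquareFree l ↔ ∀ p m, ¬ HasSquareAt l p m := by
  constructor
  · rintro hl p m ⟨hm, hlen, hsq⟩
    have hdecomp :
        l = l.take p ++ (l.drop p).take m ++ (l.drop p).take m ++ l.drop (p + 2 * m) := by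
      conv_lhs => rw [← take_append_drop (p + 2 * m) l]
      rw [two_mul, ← add_assoc, take_add, take_add, ← hsq]
    have := congrArg length (hl _ _ _ hdecomp)
    simp only [length_take, length_drop, length_nil, min_eq_zero] at this
    omega
  · rintro h x y z rfl
    by_contra hy
    refine h x.length y.length ⟨length_pos_iff.2 hy, by simp; omega, ?_⟩
    simp

instance [DecidableEq α] (l : List α) (p m : ℕ) : Decidable (HasSquareAt l p m) := by
  unfold HasSquareAt; infer_instance

instance [DecidableEq α] : DecidablePred (SquareFree (α := α)) := fun l =>
  decidable_of_iff (∀ m ≤ l.length / 2, ∀ p ≤ l.length - 2 * m, ¬ HasSquareAt l p m) <| by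
    rw [squareFree_iff_forall_not_hasSquareAt]
    refine ⟨fun h p m hsq => h m ?_ p ?_ hsq, fun h m _ p _ => h p m⟩ <;>
      · have := hsq.2.1; omega

theorem SquareFree.of_infix {u l : List α} (hl : SquareFree l) (hu : u <:+: l) : SquareFree u := by
  obtain ⟨a, b, rfl⟩ := hu
  rintro x y z rfl
  exact hl (a ++ x) y (z ++ b) (by simp)

theorem HasSquareAt.take_drop_eq {l : List α} {p m : ℕ} (hsq : HasSquareAt l p m) {x n : ℕ}
    (hx : p ≤ x) (hn : x + n ≤ p + m) : (l.drop x).take n = (l.drop (x + m)).take n := by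
  have := congrArg (fun u => (u.drop (x - p)).take n) hsq.2.2
  simp only [take_drop_take_drop_of_add_le l (show x - p + n ≤ m by omega)] at this
  rwa [show p + (x - p) = x by omega, show p + m + (x - p) = x + m by omega] at this

theorem HasSquareAt.take_drop {l : List α} {p m : ℕ} (hsq : HasSquareAt l p m) {a n : ℕ}
    (ha : a ≤ p) (hn : p + 2 * m ≤ a + n) : HasSquareAt ((l.drop a).take n) (p - a) m := by
  obtain ⟨hm, hlen, heq⟩ := hsq
  refine ⟨hm, by simp; omega, ?_⟩
  rw [take_drop_take_drop_of_add_le l (by omega), take_drop_take_drop_of_add_le l (by omega),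
    show a + (p - a) = p by omega, show a + (p - a + m) = p + m by omega, heq]

theorem hasSquareAt_of_getElem_eq {l : List α} {p m : ℕ} (hm : 0 < m)
    (hlen : p + 2 * m ≤ l.length)
    (h : ∀ t (ht : t + m < l.length), p ≤ t → t < p + m → l[t] = l[t + m]) :
    HasSquareAt l p m := by
  refine ⟨hm, hlen, ext_getElem (by simp; omega) fun i h₁ h₂ => ?_⟩
  simp only [getElem_take, getElem_drop, Nat.add_right_comm p m i]
  exact h (p + i) (by simp at h₁; omega) (by omega) (by simp at h₁; omega)

theorem SquareFree.getElem_ne_getElem_succ {l : List α} (hl : SquareFree l) {t : ℕ}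
    (ht : t + 1 < l.length) : l[t] ≠ l[t + 1] := fun heq =>
  squareFree_iff_forall_not_hasSquareAt.1 hl t 1 <|
    hasSquareAt_of_getElem_eq one_pos (by omega) fun t' _ h₁ h₂ => by
      obtain rfl : t' = t := by omega
      exact heq

end Squares

section UniformMorphism

variable {α : Type*} {h : α → List α} {k : ℕ}

theorem length_flatMap_of_uniform (hk : ∀ a, (h a).length = k) (v : List α) :
    (v.flatMap h).length = k * v.length := by
  induction v with
  | nil => rfl
  | cons a v ih => rw [flatMap_cons, length_append, ih, hk, length_cons, Nat.mul_succ, Nat.add_comm]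

theorem take_flatMap_of_uniform (hk : ∀ a, (h a).length = k) (v : List α) (n : ℕ) :
    (v.flatMap h).take (k * n) = (v.take n).flatMap h := by
  rcases le_or_gt v.length n with hn | hn
  · rw [take_of_length_le hn, take_of_length_le]
    rw [length_flatMap_of_uniform hk]
    exact Nat.mul_le_mul_left k hn
  · conv_lhs => rw [← take_append_drop n v, flatMap_append]
    exact take_left' (by rw [length_flatMap_of_uniform hk, length_take_of_le hn.le])

theorem drop_flatMap_of_uniform (hk : ∀ a, (h a).length = k) (v : List α) (n : ℕ) :
    (v.flatMap h).drop (k * n) = (v.drop n).flatMap h := by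
  rcases le_or_gt v.length n with hn | hn
  · rw [drop_of_length_le hn, drop_of_length_le]
    · rfl
    rw [length_flatMap_of_uniform hk]
    exact Nat.mul_le_mul_left k hn
  · conv_lhs => rw [← take_append_drop n v, flatMap_append]
    exact drop_left' (by rw [length_flatMap_of_uniform hk, length_take_of_le hn.le])

theorem take_drop_flatMap_of_uniform (hk : ∀ a, (h a).length = k) (v : List α) (a n : ℕ) :
    ((v.flatMap h).drop (k * a)).take (k * n) = ((v.drop a).take n).flatMap h := by
  rw [drop_flatMap_of_uniform hk, take_flatMap_of_uniform hk]

theorem take_drop_flatMap_of_lt_length (hk : ∀ a, (h a).length = k) {v : List α} {t : ℕ}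
    (ht : t < v.length) : ((v.flatMap h).drop (k * t)).take k = h v[t] := by
  have := take_drop_flatMap_of_uniform hk v t 1
  rw [mul_one, take_one_drop_eq_of_lt_length ht, flatMap_singleton] at this
  exact this

theorem take_drop_flatMap_eq_drop_take (hk : ∀ a, (h a).length = k) {v : List α} {t : ℕ}
    (ht : t < v.length) {i j : ℕ} (hj : j ≤ k) :
    ((v.flatMap h).drop (k * t + i)).take (j - i) = ((h v[t]).take j).drop i := by
  rw [← take_drop_flatMap_of_lt_length hk ht, take_take, min_eq_left hj, drop_take, drop_drop]

theorem SquareFree.dvd_of_take_drop_flatMap_eq (hk : ∀ a, (h a).length = k)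
    (hsync : ∀ x y z, x ≠ y → ∀ j < k, 0 < j → ((h x ++ h y).drop j).take k ≠ h z)
    {v : List α} (hv : SquareFree v) {n : ℕ} {z : α} (hn : n + k ≤ k * v.length)
    (hz : ((v.flatMap h).drop n).take k = h z) : k ∣ n := by
  by_contra hkn
  have hk0 : 0 < k := Nat.pos_of_ne_zero fun hk0 => by subst hk0; simp_all
  set b := n / k
  set j := n % k
  have hjk : j < k := Nat.mod_lt n hk0
  have hj : 0 < j := Nat.pos_of_ne_zero fun h0 => hkn (Nat.dvd_of_mod_eq_zero h0)
  have hnbj : n = k * b + j := (Nat.div_add_mod n k).symm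
  have hb : b + 1 < v.length := by
    by_contra! hb
    have := Nat.mul_le_mul_left k hb
    rw [Nat.mul_succ] at this
    omega
  have hpair : ((v.flatMap h).drop (k * b)).take (k * 2) = h v[b] ++ h v[b + 1] := by
    rw [take_drop_flatMap_of_uniform hk, drop_eq_getElem_cons (by omega),
      drop_eq_getElem_cons hb]
    simp only [take_succ_cons, take_zero, flatMap_cons, flatMap_nil, append_nil]
  refine hsync _ _ z (hv.getElem_ne_getElem_succ hb) j hjk hj ?_
  rw [← hpair, take_drop_take_drop_of_add_le _ (by omega), ← hnbj, hz]

theorem exists_hasSquareAt_of_hasSquareAt_flatMap (hk : ∀ a, (h a).length = k) {P S : ℕ}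
    (hpre : (fun x => (h x).take P).Injective) (hsuf : (fun x => (h x).rtake S).Injective)
    (hPS : P + S ≤ k + 1) {v : List α} {a r m : ℕ} (hr : r < k) (hm : 0 < m)
    (hsq : HasSquareAt (v.flatMap h) (k * a + r) (k * m)) : ∃ p, HasSquareAt v p m := by
  have hlen := hsq.2.1
  rw [length_flatMap_of_uniform hk] at hlen
  have hk0 : 0 < k := by omega
  have hinj : h.Injective := Function.Injective.of_comp (f := take P) hpre
  have hagree : ∀ t i j, i ≤ j → j ≤ k → k * a + r ≤ k * t + i →
      k * t + j ≤ k * a + r + k * m → ∀ (ht : t + m < v.length),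
      ((h v[t]).take j).drop i = ((h v[t + m]).take j).drop i := by
    intro t i j hij hj h₁ h₂ ht
    rw [← take_drop_flatMap_eq_drop_take hk (by omega) hj,
      ← take_drop_flatMap_eq_drop_take hk ht hj, hsq.take_drop_eq h₁ (by omega), mul_add,
      Nat.add_right_comm]
  have hfull : ∀ t, a < t → t < a + m → ∀ (ht : t + m < v.length), v[t] = v[t + m] := by
    intro t h₁ h₂ ht
    apply hinj
    have := hagree t 0 k (Nat.zero_le k) le_rfl (by nlinarith) (by nlinarith) ht
    simpa [take_of_length_le, hk] using this
  -- Either the last `S` letters of `h v[a]` or the first `P` letters of `h v[a + m]` lie in the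
  -- first half of the square, and so recur `m` blocks later.
  by_cases hrS : r ≤ k - S
  · refine ⟨a, hasSquareAt_of_getElem_eq hm (by nlinarith) fun t ht h₁ h₂ => ?_⟩
    rcases h₁.eq_or_lt with rfl | h₁
    · apply hsuf
      have := hagree a (k - S) k (Nat.sub_le k S) le_rfl (by omega) (by nlinarith) ht
      simpa [rtake, take_of_length_le, hk] using this
    · exact hfull t h₁ h₂ ht
  · refine ⟨a + 1, hasSquareAt_of_getElem_eq hm (by nlinarith) fun t ht h₁ h₂ => ?_⟩
    rcases (show t ≤ a + m by omega).eq_or_lt with rfl | h₂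
    · apply hpre
      have hPr : P ≤ r := by omega
      have := hagree (a + m) 0 P (Nat.zero_le P) (by omega) (by nlinarith) (by nlinarith) ht
      simpa using this
    · exact hfull t (by omega) h₂ ht

theorem SquareFree.flatMap_of_uniform (hk : ∀ a, (h a).length = k) {P S : ℕ}
    (hpre : (fun x => (h x).take P).Injective) (hsuf : (fun x => (h x).rtake S).Injective)
    (hPS : P + S ≤ k + 1)
    (hsync : ∀ x y z, x ≠ y → ∀ j < k, 0 < j → ((h x ++ h y).drop j).take k ≠ h z)
    (hsmall : ∀ u : List α, u.length ≤ 4 → SquareFree u → SquareFree (u.flatMap h))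
    {v : List α} (hv : SquareFree v) : SquareFree (v.flatMap h) := by
  rw [squareFree_iff_forall_not_hasSquareAt]
  intro p m hsq
  have hlen := hsq.2.1
  rw [length_flatMap_of_uniform hk] at hlen
  have hk0 : 0 < k := Nat.pos_of_ne_zero fun hk0 => by
    have := hsq.1
    rw [hk0, zero_mul] at hlen
    omega
  obtain ⟨a, r, hr, rfl⟩ : ∃ a r, r < k ∧ p = k * a + r :=
    ⟨p / k, p % k, Nat.mod_lt p hk0, (Nat.div_add_mod p k).symm⟩
  by_cases hshort : r + m < 2 * k
  · -- the square lies in the image of the four letters `v[a], …, v[a+3]`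
    have hu := hsmall ((v.drop a).take 4) (length_take_le 4 _)
      (hv.of_infix ((take_prefix 4 _).isInfix.trans (drop_suffix a v).isInfix))
    rw [← take_drop_flatMap_of_uniform hk, squareFree_iff_forall_not_hasSquareAt] at hu
    refine hu r m ?_
    simpa using hsq.take_drop (a := k * a) (n := k * 4) (by omega) (by omega)
  · -- the image of `v[a+1]` lies in the first half, so the period `m` is a multiple of `k`
    have hblock : a + 1 < v.length := by nlinarith
    have hdvd : k ∣ k * (a + 1) + m := by
      refine hv.dvd_of_take_drop_flatMap_eq hk hsync (z := v[a + 1]) (by nlinarith) ?_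
      rw [← hsq.take_drop_eq (by nlinarith) (by nlinarith),
        take_drop_flatMap_of_lt_length hk hblock]
    obtain ⟨m', rfl⟩ := (Nat.dvd_add_right (dvd_mul_right k (a + 1))).1 hdvd
    obtain ⟨p', hp'⟩ := exists_hasSquareAt_of_hasSquareAt_flatMap hk hpre hsuf hPS hr
      (Nat.pos_of_ne_zero (by rintro rfl; simpa using hsq.1)) hsq
    exact squareFree_iff_forall_not_hasSquareAt.1 hv p' m' hp'

end UniformMorphism

theorem factorWord_add (w : ℕ → Fin 3) (i a b : ℕ) :
    factorWord w i (a + b) = factorWord w i a ++ factorWord w (i + a) b := by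
  simp only [factorWord, range_add, map_append, map_map]
  congr 1
  exact map_congr_left fun j _ => by simp [Nat.add_assoc]

theorem length_factorWord (w : ℕ → Fin 3) (i n : ℕ) : (factorWord w i n).length = n := by
  simp [factorWord]

theorem factorWord_one (w : ℕ → Fin 3) (i : ℕ) : factorWord w i 1 = [w i] := by
  simp [factorWord]

theorem factorWord_prefix_of_le (w : ℕ → Fin 3) (i : ℕ) {n N : ℕ} (h : n ≤ N) :
    factorWord w i n <+: factorWord w i N := by
  rw [← Nat.add_sub_cancel' h, factorWord_add]
  exact prefix_append _ _

theorem infSquareFree_of_forall_squareFree_factorWord {w : ℕ → Fin 3}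
    (hw : ∀ n, SquareFree (factorWord w 0 n)) : InfSquareFree w := by
  rintro u ⟨i, hu⟩
  refine (hw (i + u.length)).of_infix ?_
  rw [factorWord_add, Nat.zero_add, ← hu]
  exact (suffix_append _ _).isInfix

open Filter Topology in
theorem tendsto_div_of_nat_bounds {f : ℕ → ℕ} {a b K : ℕ} (hb : 0 < b)
    (h₁ : ∀ n, b * f n ≤ a * n + K) (h₂ : ∀ n, a * n ≤ b * f n + K) :
    Tendsto (fun n : ℕ => (f n : ℝ) / n) atTop (𝓝 ((a : ℝ) / b)) := by
  have hlim : Tendsto (fun n : ℕ => (K / b : ℝ) * (1 / n)) atTop (𝓝 0) := by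
    simpa using tendsto_one_div_atTop_nhds_zero_nat.const_mul (K / b : ℝ)
  refine tendsto_sub_nhds_zero_iff.1 (squeeze_zero_norm' ?_ hlim)
  filter_upwards [eventually_gt_atTop 0] with n hn
  have hdev : |(b : ℝ) * f n - a * n| ≤ K := by
    have hup : ((b * f n : ℕ) : ℝ) ≤ (a * n + K : ℕ) := by exact_mod_cast h₁ n
    have hlo : ((a * n : ℕ) : ℝ) ≤ (b * f n + K : ℕ) := by exact_mod_cast h₂ n
    push_cast at hup hlo
    exact abs_le.2 ⟨by linarith, by linarith⟩
  calc ‖(f n : ℝ) / n - a / b‖ = |(b : ℝ) * f n - a * n| / (b * n) := by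
        rw [Real.norm_eq_abs, div_sub_div _ _ (by positivity) (by positivity), abs_div,
          abs_of_pos (by positivity : (0 : ℝ) < n * b)]
        ring_nf
    _ ≤ K / (b * n) := by gcongr
    _ = K / b * (1 / n) := by field_simp

/-- The letters `a, b, c` are encoded as `0, 1, 2`. -/
def ternaryMorphism : Fin 3 → List (Fin 3)
  | 0 => [2, 0, 2, 1, 2, 0, 1, 0, 2, 1, 0, 1]
  | 1 => [2, 0, 1, 0, 2, 1, 2, 0, 2, 1, 0, 1]
  | 2 => [2, 1, 0, 2, 1, 2, 0, 1, 2, 1, 0, 1]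

theorem length_ternaryMorphism (x : Fin 3) : (ternaryMorphism x).length = 12 := by
  fin_cases x <;> rfl

theorem squareFree_flatMap_ternaryMorphism_of_length_le_four (u : List (Fin 3))
    (hu : u.length ≤ 4) : SquareFree u → SquareFree (u.flatMap ternaryMorphism) := by
  match u, hu with
  | [], _ => decide
  | [a], _ => revert a; decide
  | [a, b], _ => revert a b; decide
  | [a, b, c], _ => revert a b c; decide +kernel
  | [a, b, c, d], _ => revert a b c d; decide +kernel

theorem SquareFree.flatMap_ternaryMorphism {v : List (Fin 3)} (hv : SquareFree v) :
    SquareFree (v.flatMap ternaryMorphism) :=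
  hv.flatMap_of_uniform length_ternaryMorphism (P := 7) (S := 6) (by decide) (by decide)
    (by norm_num) (by decide) squareFree_flatMap_ternaryMorphism_of_length_le_four

/-- The fixed point of `ternaryMorphism` starting with `c`. -/
def ternaryWord : ℕ → Fin 3
  | 0 => 2
  | n + 1 => (ternaryMorphism (ternaryWord ((n + 1) / 12))).getD ((n + 1) % 12) 0

theorem ternaryWord_mul_add (q : ℕ) {r : ℕ} (hr : r < 12) :
    ternaryWord (12 * q + r) = (ternaryMorphism (ternaryWord q)).getD r 0 := by
  rcases hn : 12 * q + r with _ | n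
  · obtain ⟨rfl, rfl⟩ : q = 0 ∧ r = 0 := by omega
    rw [ternaryWord]
    rfl
  · rw [ternaryWord, show (n + 1) / 12 = q by omega, show (n + 1) % 12 = r by omega]

theorem factorWord_ternaryWord_block (q : ℕ) {r : ℕ} (hr : r ≤ 12) :
    factorWord ternaryWord (12 * q) r = (ternaryMorphism (ternaryWord q)).take r := by
  refine ext_getElem (by simp [factorWord, length_ternaryMorphism, hr]) fun j h₁ _ => ?_
  simp only [factorWord, length_map, length_range] at h₁
  simp [factorWord, ternaryWord_mul_add q (show j < 12 by omega),
    getElem?_eq_getElem (show j < (ternaryMorphism (ternaryWord q)).length by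
      rw [length_ternaryMorphism]; omega)]

theorem factorWord_ternaryWord_mul (q : ℕ) :
    factorWord ternaryWord 0 (12 * q) = (factorWord ternaryWord 0 q).flatMap ternaryMorphism := by
  induction q with
  | zero => rfl
  | succ q ih =>
    rw [Nat.mul_succ, factorWord_add, ih, Nat.zero_add, factorWord_ternaryWord_block q le_rfl,
      take_of_length_le (length_ternaryMorphism _).le, factorWord_add _ 0 q 1, Nat.zero_add,
      factorWord_one, flatMap_append, flatMap_singleton]

theorem factorWord_ternaryWord_mul_add (q : ℕ) {r : ℕ} (hr : r ≤ 12) :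
    factorWord ternaryWord 0 (12 * q + r) =
      (factorWord ternaryWord 0 q).flatMap ternaryMorphism ++
        (ternaryMorphism (ternaryWord q)).take r := by
  rw [factorWord_add, factorWord_ternaryWord_mul, Nat.zero_add, factorWord_ternaryWord_block q hr]

theorem infSquareFree_ternaryWord : InfSquareFree ternaryWord := by
  have hpow : ∀ j, SquareFree (factorWord ternaryWord 0 (12 ^ j)) := by
    intro j
    induction j with
    | zero =>
      rw [pow_zero, factorWord_one]
      exact (by decide : ∀ x : Fin 3, SquareFree [x]) _
    | succ j ih => rw [pow_succ', factorWord_ternaryWord_mul]; exact ih.flatMap_ternaryMorphism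
  exact infSquareFree_of_forall_squareFree_factorWord fun n =>
    (hpow n).of_infix (factorWord_prefix_of_le _ 0 (Nat.lt_pow_self (by norm_num)).le).isInfix

theorem count_flatMap_ternaryMorphism (u : List (Fin 3)) :
    (u.flatMap ternaryMorphism).count 2 = 4 * u.length ∧
      (u.flatMap ternaryMorphism).count 0 + u.count 2 = 4 * u.length ∧
      (u.flatMap ternaryMorphism).count 1 = 4 * u.length + u.count 2 := by
  induction u with
  | nil => simp
  | cons x u ih =>
    fin_cases x <;> simp [flatMap_cons, ternaryMorphism] <;> omega

theorem count_factorWord_ternaryWord_mul_add (x : Fin 3) (q : ℕ) {r : ℕ} (hr : r ≤ 12) :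
    ((factorWord ternaryWord 0 q).flatMap ternaryMorphism).count x ≤
      (factorWord ternaryWord 0 (12 * q + r)).count x ∧
    (factorWord ternaryWord 0 (12 * q + r)).count x ≤
      ((factorWord ternaryWord 0 q).flatMap ternaryMorphism).count x + r := by
  rw [factorWord_ternaryWord_mul_add q hr, count_append]
  have := (count_le_length (a := x)).trans (length_take_le r (ternaryMorphism (ternaryWord q)))
  omega

theorem count_two_factorWord_ternaryWord (n : ℕ) :
    36 * (factorWord ternaryWord 0 n).count 2 ≤ 12 * n + 400 ∧
      12 * n ≤ 36 * (factorWord ternaryWord 0 n).count 2 + 400 := by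
  have hblock := count_factorWord_ternaryWord_mul_add 2 (n / 12) (r := n % 12) (by omega)
  have himage := count_flatMap_ternaryMorphism (factorWord ternaryWord 0 (n / 12))
  rw [Nat.div_add_mod, length_factorWord] at *
  omega

theorem count_zero_factorWord_ternaryWord (n : ℕ) :
    36 * (factorWord ternaryWord 0 n).count 0 ≤ 11 * n + 1000 ∧
      11 * n ≤ 36 * (factorWord ternaryWord 0 n).count 0 + 1000 := by
  have hblock := count_factorWord_ternaryWord_mul_add 0 (n / 12) (r := n % 12) (by omega)
  have himage := count_flatMap_ternaryMorphism (factorWord ternaryWord 0 (n / 12))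
  have hq := count_two_factorWord_ternaryWord (n / 12)
  rw [Nat.div_add_mod, length_factorWord] at *
  omega

theorem count_one_factorWord_ternaryWord (n : ℕ) :
    36 * (factorWord ternaryWord 0 n).count 1 ≤ 13 * n + 1000 ∧
      13 * n ≤ 36 * (factorWord ternaryWord 0 n).count 1 + 1000 := by
  have hblock := count_factorWord_ternaryWord_mul_add 1 (n / 12) (r := n % 12) (by omega)
  have himage := count_flatMap_ternaryMorphism (factorWord ternaryWord 0 (n / 12))
  have hq := count_two_factorWord_ternaryWord (n / 12)
  rw [Nat.div_add_mod, length_factorWord] at *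
  omega

/-- There exists an infinite ternary square-free word whose letter frequencies
exist and are unequal: `11/36` for the letter `a`, `13/36` for the letter `b`,
and `12/36` for the letter `c`. -/
theorem exists_infinite_squareFree_word_with_unequal_frequencies :
    ∃ w : ℕ → Fin 3, InfSquareFree w ∧
      Filter.Tendsto (fun n : ℕ => ((factorWord w 0 n).count 0 : ℝ) / n)
        Filter.atTop (nhds (11 / 36)) ∧
      Filter.Tendsto (fun n : ℕ => ((factorWord w 0 n).count 1 : ℝ) / n)
        Filter.atTop (nhds (13 / 36)) ∧
      Filter.Tendsto (fun n : ℕ => ((factorWord w 0 n).count 2 : ℝ) / n)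
        Filter.atTop (nhds (12 / 36)) := by
  refine ⟨ternaryWord, infSquareFree_ternaryWord, ?_, ?_, ?_⟩
  · exact_mod_cast tendsto_div_of_nat_bounds (a := 11) (b := 36) (by norm_num)
      (fun n => (count_zero_factorWord_ternaryWord n).1)
      (fun n => (count_zero_factorWord_ternaryWord n).2)
  · exact_mod_cast tendsto_div_of_nat_bounds (a := 13) (b := 36) (by norm_num)
      (fun n => (count_one_factorWord_ternaryWord n).1)
      (fun n => (count_one_factorWord_ternaryWord n).2)
  · exact_mod_cast tendsto_div_of_nat_bounds (a := 12) (b := 36) (by norm_num)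
      (fun n => (count_two_factorWord_ternaryWord n).1)
      (fun n => (count_two_factorWord_ternaryWord n).2)
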